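/- arXiv:math/0602103 — 5 statements merged into one kernel-verified Lean document; each statement's English description precedes it below -/
import Mathlib

section
/- For any monoid S, every autoequivalence φ of the category _S𝒜⁰ of finitely generated free left S-acts is equinumerous: for every object A of _S𝒜⁰ there is an isomorphism φ(A) ≅ A in _S𝒜⁰. -/
open CategoryTheory

/-- `f : S × X → S × Y` is a homomorphism of free left `S`-acts, where the action of
`S` on `S × X` is `s • (t, x) = (s * t, x)`. -/
def IsActHom (S : Type) [Monoid S] {X Y : Type} (f : S × X → S × Y) : Prop :=
  ∀ (s : S) (p : S × X), f (s * p.1, p.2) = (s * (f p).1, (f p).2)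

/-- Objects of the category `_S𝒜⁰` of finitely generated free left `S`-acts:
the free `S`-act on a finite set `X`, with carrier `S × X`. -/
structure FreeAct (S : Type) [Monoid S] : Type 1 where
  X : Type
  finX : Finite X

/-- The category `_S𝒜⁰`: morphisms are the `S`-equivariant maps. -/
instance (S : Type) [Monoid S] : Category (FreeAct S) where
  Hom A B := {f : S × A.X → S × B.X // IsActHom S f}
  id A := ⟨fun p => p, fun _ _ => rfl⟩
  comp f g := ⟨fun p => g.1 (f.1 p), fun s p => by
    show g.1 (f.1 (s * p.1, p.2)) = _; rw [f.2 s p]; exact g.2 s (f.1 p)⟩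

attribute [instance] FreeAct.finX

namespace FreeActAux

variable {S : Type} [Monoid S]

@[ext] lemma hom_ext {A B : FreeAct S} {f g : A ⟶ B} (h : f.1 = g.1) : f = g :=
  Subtype.ext h

lemma comp_val {A B C : FreeAct S} (f : A ⟶ B) (g : B ⟶ C) (p : S × A.X) :
    (f ≫ g).1 p = g.1 (f.1 p) := rfl

lemma id_val (A : FreeAct S) (p : S × A.X) : (𝟙 A : A ⟶ A).1 p = p := rfl

/-- Second components only depend on second components, for act homs. -/
lemma snd_eq {X Y : Type} {f : S × X → S × Y} (hf : IsActHom S f) (s : S) (x : X) :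
    (f (s, x)).2 = (f (1, x)).2 := by
  have := hf s (1, x)
  simpa [mul_one] using congrArg Prod.snd this

/-- An equivalence of index sets gives an isomorphism of free acts. -/
noncomputable def isoOfEquiv {A B : FreeAct S} (e : A.X ≃ B.X) : A ≅ B where
  hom := ⟨fun p => (p.1, e p.2), fun _ _ => rfl⟩
  inv := ⟨fun p => (p.1, e.symm p.2), fun _ _ => rfl⟩
  hom_inv_id := by apply hom_ext; funext p; show (p.1, e.symm (e p.2)) = p; simp
  inv_hom_id := by apply hom_ext; funext p; show (p.1, e (e.symm p.2)) = p; simp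

/-- An isomorphism of free acts gives an equivalence of index sets. -/
noncomputable def equivOfIso {A B : FreeAct S} (i : A ≅ B) : A.X ≃ B.X where
  toFun x := (i.hom.1 (1, x)).2
  invFun y := (i.inv.1 (1, y)).2
  left_inv x := by
    show (i.inv.1 (1, (i.hom.1 (1, x)).2)).2 = x
    have h1 : (i.inv.1 (1, (i.hom.1 (1, x)).2)).2 = (i.inv.1 (i.hom.1 (1, x))).2 := by
      rw [snd_eq i.inv.2 (i.hom.1 (1, x)).1 (i.hom.1 (1, x)).2]
    have h2 : (i.hom ≫ i.inv).1 (1, x) = ((1 : S), x) := by rw [i.hom_inv_id]; rfl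
    rw [h1]; exact congrArg Prod.snd h2
  right_inv y := by
    show (i.hom.1 (1, (i.inv.1 (1, y)).2)).2 = y
    have h1 : (i.hom.1 (1, (i.inv.1 (1, y)).2)).2 = (i.hom.1 (i.inv.1 (1, y))).2 := by
      rw [snd_eq i.hom.2 (i.inv.1 (1, y)).1 (i.inv.1 (1, y)).2]
    have h2 : (i.inv ≫ i.hom).1 (1, y) = ((1 : S), y) := by rw [i.inv_hom_id]; rfl
    rw [h1]; exact congrArg Prod.snd h2

/-- The rank of a f.g. free act. -/
noncomputable def rank (A : FreeAct S) : ℕ := Nat.card A.X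

lemma rank_eq_of_iso {A B : FreeAct S} (i : A ≅ B) : rank A = rank B :=
  Nat.card_congr (equivOfIso i)

noncomputable def isoOfRankEq {A B : FreeAct S} (h : rank A = rank B) : A ≅ B :=
  isoOfEquiv ((Finite.equivFin A.X).trans ((finCongr h).trans
    (Finite.equivFin B.X).symm))

/-- The free act on `Fin n`. -/
def freeN (S : Type) [Monoid S] (n : ℕ) : FreeAct S := ⟨Fin n, inferInstance⟩

lemma rank_freeN (n : ℕ) : rank (freeN S n) = n := by simp [rank, freeN]

/-- The coproduct object. -/
def cop (A B : FreeAct S) : FreeAct S := ⟨A.X ⊕ B.X, inferInstance⟩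

lemma rank_cop (A B : FreeAct S) : rank (cop A B) = rank A + rank B := by
  simp [rank, cop, Nat.card_sum]

def copInl (A B : FreeAct S) : A ⟶ cop A B :=
  ⟨fun p => (p.1, Sum.inl p.2), fun _ _ => rfl⟩

def copInr (A B : FreeAct S) : B ⟶ cop A B :=
  ⟨fun p => (p.1, Sum.inr p.2), fun _ _ => rfl⟩

open Limits in
/-- The canonical binary cofan on `cop A B`. -/
def copCofan (A B : FreeAct S) : BinaryCofan A B :=
  BinaryCofan.mk (copInl A B) (copInr A B)

open Limits in
def copDesc {A B D : FreeAct S} (f : A ⟶ D) (g : B ⟶ D) : cop A B ⟶ D :=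
  ⟨fun p => Sum.rec (fun x => f.1 (p.1, x)) (fun y => g.1 (p.1, y)) p.2, by
    intro s p
    rcases p with ⟨t, x | y⟩
    · exact f.2 s (t, x)
    · exact g.2 s (t, y)⟩

open Limits in
/-- `copCofan` is a colimit. -/
def copIsColimit (A B : FreeAct S) : IsColimit (copCofan A B) := by
  refine BinaryCofan.isColimitMk (fun s => copDesc s.inl s.inr) (fun s => rfl) (fun s => rfl)
    (fun s m h1 h2 => ?_)
  apply hom_ext; funext p
  rcases p with ⟨t, x | y⟩
  · exact congrFun (congrArg Subtype.val h1) (t, x)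
  · exact congrFun (congrArg Subtype.val h2) (t, y)

open Limits in
/-- An equivalence sends `cop A B` to something of the rank of `cop (φ A) (φ B)`. -/
noncomputable def mapCopIso (φ : FreeAct S ⥤ FreeAct S) [φ.IsEquivalence] (A B : FreeAct S) :
    φ.obj (cop A B) ≅ cop (φ.obj A) (φ.obj B) :=
  IsColimit.coconePointsIsoOfNatIso
    (isColimitOfPreserves φ (copIsColimit A B))
    (copIsColimit (φ.obj A) (φ.obj B))
    (pairComp A B φ)

end FreeActAux

open FreeActAux in
/-- For any monoid `S`, every autoequivalence `φ` of the category `_S𝒜⁰`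
of finitely generated free left `S`-acts is equinumerous: `φ(A) ≅ A` for every object `A`. -/
theorem autoequivalence_equinumerous (S : Type) [Monoid S]
    (φ : FreeAct S ⥤ FreeAct S) (hφ : φ.IsEquivalence) (A : FreeAct S) :
    Nonempty (φ.obj A ≅ A) := by
  classical
  set f : ℕ → ℕ := fun n => rank (φ.obj (freeN S n)) with hf
  -- f is additive
  have hadd : ∀ m n, f (m + n) = f m + f n := by
    intro m n
    have e1 : freeN S (m + n) ≅ cop (freeN S m) (freeN S n) :=
      isoOfEquiv (finSumFinEquiv.symm)
    calc f (m + n) = rank (φ.obj (cop (freeN S m) (freeN S n))) :=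
          rank_eq_of_iso (φ.mapIso e1)
      _ = rank (cop (φ.obj (freeN S m)) (φ.obj (freeN S n))) :=
          rank_eq_of_iso (mapCopIso φ _ _)
      _ = f m + f n := rank_cop _ _
  -- f is surjective
  have hsurj : ∀ k, ∃ n, f n = k := by
    intro k
    let e := φ.asEquivalence
    refine ⟨rank (e.inverse.obj (freeN S k)), ?_⟩
    have e2 : freeN S (rank (e.inverse.obj (freeN S k))) ≅ e.inverse.obj (freeN S k) :=
      isoOfRankEq (rank_freeN _)
    have e3 : φ.obj (freeN S (rank (e.inverse.obj (freeN S k)))) ≅ freeN S k :=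
      (φ.mapIso e2).trans (e.counitIso.app (freeN S k))
    have := rank_eq_of_iso e3
    rw [rank_freeN] at this
    exact this
  -- f n = n * f 1
  have hmul : ∀ n, f n = n * f 1 := by
    intro n
    induction n with
    | zero =>
      have h0 : f 0 + f 0 = f 0 := by rw [← hadd]
      omega
    | succ n ih =>
      have := hadd n 1
      rw [ih] at this
      rw [this]; ring
  have hf1 : f 1 = 1 := by
    obtain ⟨n, hn⟩ := hsurj 1
    rw [hmul n] at hn
    exact Nat.dvd_one.mp (Dvd.intro_left n hn)
  have hfid : ∀ n, f n = n := fun n => by rw [hmul n, hf1, mul_one]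
  -- conclude
  have eA : freeN S (rank A) ≅ A := isoOfRankEq (rank_freeN _)
  have h1 : rank (φ.obj A) = rank A := by
    rw [← rank_eq_of_iso (φ.mapIso eA)]
    exact hfid (rank A)
  exact ⟨isoOfRankEq h1⟩
end

section
/- For any monoid S, every automorphism φ of the skeleton category _S𝒜⁰_Sk of finitely generated free left S-acts is stable: φ(Fₙ) = Fₙ for every object Fₙ. -/
open CategoryTheory

/-- The skeleton category `_S𝒜⁰_Sk` of finitely generated free left `S`-acts:
objects are natural numbers `n`, standing for the free act `Fₙ = S × Fin n`. -/
def SkFree (S : Type) [Monoid S] : Type := ℕ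

/-- The category structure on `_S𝒜⁰_Sk`: morphisms `n ⟶ m` are the `S`-equivariant maps
`S × Fin n → S × Fin m`. -/
instance (S : Type) [Monoid S] : Category (SkFree S) where
  Hom n m := {f : S × Fin n → S × Fin m // IsActHom S f}
  id n := ⟨fun p => p, fun _ _ => rfl⟩
  comp f g := ⟨fun p => g.1 (f.1 p), fun s p => by
    show g.1 (f.1 (s * p.1, p.2)) = _; rw [f.2 s p]; exact g.2 s (f.1 p)⟩

/-- An automorphism of a category `C`: a functor `C ⥤ C` admitting a functor `ψ` with
`φ ⋙ ψ` and `ψ ⋙ φ` equal (not merely isomorphic) to the identity functor. -/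
def IsCatAutomorphism {C : Type*} [Category C] (φ : C ⥤ C) : Prop :=
  ∃ ψ : C ⥤ C, φ ⋙ ψ = 𝟭 C ∧ ψ ⋙ φ = 𝟭 C

/-!
An isomorphism `Fₘ ≅ Fₙ` of free acts is determined by where it sends the free generators
`(1, i)`, and the second components of these images give a bijection `Fin m ≃ Fin n`; so
isomorphic objects of the skeleton are equal. An automorphism is an equivalence, hence preserves
the coproduct `F_{m+n} = Fₘ ⊔ Fₙ`, so `n ↦ rank φ(Fₙ)` is additive, i.e. multiplication by
`rank φ(F₁)`; as `F₁` lies in the essential image, that factor is `1`.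
-/

theorem IsActHom.apply_eq {S : Type} [Monoid S] {X Y : Type} {f : S × X → S × Y}
    (hf : IsActHom S f) (p : S × X) : f p = (p.1 * (f (1, p.2)).1, (f (1, p.2)).2) := by
  simpa using hf p.1 (1, p.2)

theorem IsCatAutomorphism.isEquivalence {C : Type*} [Category C] {φ : C ⥤ C}
    (hφ : IsCatAutomorphism φ) : φ.IsEquivalence := by
  obtain ⟨ψ, hφψ, hψφ⟩ := hφ
  exact (CategoryTheory.Equivalence.mk φ ψ (eqToIso hφψ.symm) (eqToIso hψφ)).isEquivalence_functor

theorem AddMonoidHom.eq_id_of_one_mem_range (f : ℕ →+ ℕ) (h : 1 ∈ Set.range f) :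
    f = AddMonoidHom.id ℕ := by
  obtain ⟨a, ha⟩ := h
  rw [f.apply_nat, smul_eq_mul] at ha
  exact AddMonoidHom.ext_nat (Nat.eq_one_of_mul_eq_one_left ha)

namespace SkFree

open Limits

variable {S : Type} [Monoid S]

abbrev of (S : Type) [Monoid S] (n : ℕ) : SkFree S := n

def rank (X : SkFree S) : ℕ := X

theorem hom_ext {X Y : SkFree S} {f g : X ⟶ Y} (h : ∀ p, f.1 p = g.1 p) : f = g :=
  Subtype.ext (funext h)

theorem comp_apply {X Y Z : SkFree S} (f : X ⟶ Y) (g : Y ⟶ Z) (p : S × Fin X) :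
    (f ≫ g).1 p = g.1 (f.1 p) := rfl

theorem skeletal : Skeletal (SkFree S) := by
  rintro X Y ⟨e⟩
  have hom_inv (x : Fin X) : (e.inv.1 (1, (e.hom.1 (1, x)).2)).2 = x := by
    rw [← congrArg Prod.snd (e.inv.2.apply_eq (e.hom.1 (1, x))), ← comp_apply, e.hom_inv_id]
    rfl
  have inv_hom (y : Fin Y) : (e.hom.1 (1, (e.inv.1 (1, y)).2)).2 = y := by
    rw [← congrArg Prod.snd (e.hom.2.apply_eq (e.inv.1 (1, y))), ← comp_apply, e.inv_hom_id]
    rfl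
  exact Fin.equiv_iff_eq.mp
    ⟨⟨fun x => (e.hom.1 (1, x)).2, fun y => (e.inv.1 (1, y)).2, hom_inv, inv_hom⟩⟩

def inl (m n : ℕ) : of S m ⟶ of S (m + n) := ⟨fun p => (p.1, Fin.castAdd n p.2), fun _ _ => rfl⟩

def inr (m n : ℕ) : of S n ⟶ of S (m + n) := ⟨fun p => (p.1, Fin.natAdd m p.2), fun _ _ => rfl⟩

def desc {m n : ℕ} {Z : SkFree S} (f : of S m ⟶ Z) (g : of S n ⟶ Z) : of S (m + n) ⟶ Z :=
  ⟨fun p => Fin.addCases (motive := fun _ => S × Fin Z) (fun i => f.1 (p.1, i))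
      (fun j => g.1 (p.1, j)) p.2, by
    rintro s ⟨t, i⟩
    induction i using Fin.addCases with
    | left i => simpa using f.2 s (t, i)
    | right j => simpa using g.2 s (t, j)⟩

theorem inl_desc {m n : ℕ} {Z : SkFree S} (f : of S m ⟶ Z) (g : of S n ⟶ Z) :
    inl m n ≫ desc f g = f :=
  hom_ext fun p => Fin.addCases_left (motive := fun _ => S × Fin Z)
    (left := fun i => f.1 (p.1, i)) (right := fun j => g.1 (p.1, j)) p.2

theorem inr_desc {m n : ℕ} {Z : SkFree S} (f : of S m ⟶ Z) (g : of S n ⟶ Z) :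
    inr m n ≫ desc f g = g :=
  hom_ext fun p => Fin.addCases_right (motive := fun _ => S × Fin Z)
    (left := fun i => f.1 (p.1, i)) (right := fun j => g.1 (p.1, j)) p.2

theorem hom_ext_add {m n : ℕ} {Z : SkFree S} {h₁ h₂ : of S (m + n) ⟶ Z}
    (hl : inl m n ≫ h₁ = inl m n ≫ h₂) (hr : inr m n ≫ h₁ = inr m n ≫ h₂) : h₁ = h₂ :=
  hom_ext fun ⟨t, i⟩ => by
    induction i using Fin.addCases with
    | left i => exact congrArg (fun h => h.1 (t, i)) hl
    | right j => exact congrArg (fun h => h.1 (t, j)) hr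

def isColimitBinaryCofan (m n : ℕ) : IsColimit (BinaryCofan.mk (inl (S := S) m n) (inr m n)) :=
  BinaryCofan.IsColimit.mk _ desc inl_desc inr_desc fun f g _ hf hg =>
    hom_ext_add (hf.trans (inl_desc f g).symm) (hg.trans (inr_desc f g).symm)

theorem rank_obj_add (φ : SkFree S ⥤ SkFree S) [φ.IsEquivalence] (m n : ℕ) :
    rank (φ.obj (of S (m + n))) = rank (φ.obj (of S m)) + rank (φ.obj (of S n)) :=
  skeletal ⟨IsColimit.coconePointUniqueUpToIso
    (mapIsColimitOfPreservesOfIsColimit φ _ _ (isColimitBinaryCofan m n))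
    (isColimitBinaryCofan (rank (φ.obj (of S m))) (rank (φ.obj (of S n))))⟩

theorem one_mem_range_rank_obj (φ : SkFree S ⥤ SkFree S) [φ.IsEquivalence] :
    1 ∈ Set.range fun n => rank (φ.obj (of S n)) :=
  ⟨φ.objPreimage (of S 1), skeletal ⟨φ.objObjPreimageIso (of S 1)⟩⟩

theorem obj_eq_of_isEquivalence (φ : SkFree S ⥤ SkFree S) [φ.IsEquivalence] (X : SkFree S) :
    φ.obj X = X := by
  let rankObj : ℕ →+ ℕ :=
    { toFun n := rank (φ.obj (of S n))
      map_zero' := by have h := rank_obj_add φ 0 0; rw [add_zero] at h; omega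
      map_add' := rank_obj_add φ }
  exact DFunLike.congr_fun (rankObj.eq_id_of_one_mem_range (one_mem_range_rank_obj φ)) X

end SkFree

/-- Every automorphism of the skeleton category `_S𝒜⁰_Sk` of finitely
generated free left `S`-acts is stable: `φ(Fₙ) = Fₙ` for every object `Fₙ`. -/
theorem automorphism_stable (S : Type) [Monoid S]
    (φ : SkFree S ⥤ SkFree S) (hφ : IsCatAutomorphism φ) (n : SkFree S) :
    φ.obj n = n :=
  have := hφ.isEquivalence
  SkFree.obj_eq_of_isEquivalence φ n
end

section
/- Every automorphism φ of the skeleton category _S𝒜⁰_Sk of finitely generated free left S-acts which is constant on the canonical injections, i.e. φ(μᵢ) = μᵢ for all canonical injections μᵢ : S → Fₙ (1 ≤ i ≤ n, n ∈ ℕ), is twisted: φ = φ^σ for some monoid automorphism σ of S. -/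
open CategoryTheory

/-- The object `Fₙ = S × Fin n` of the skeleton category. -/
def toSk (S : Type) [Monoid S] (n : ℕ) : SkFree S := n

/-- The twisted automorphism `φ^σ` associated to a monoid automorphism `σ` of `S`:
it fixes every object `Fₙ` and sends `f : Fₙ ⟶ Fₘ` to `σₘ ∘ f ∘ σₙ⁻¹`, where
`σₙ : S × Fin n → S × Fin n` is the bijection `(t, i) ↦ (σ t, i)`. -/
def twistFunctor (S : Type) [Monoid S] (σ : S ≃* S) : SkFree S ⥤ SkFree S where
  obj n := n
  map {n m} f :=
    ⟨fun p => ((σ ((f.1 (σ.symm p.1, p.2)).1)), (f.1 (σ.symm p.1, p.2)).2), by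
      intro s p
      have h := f.2 (σ.symm s) (σ.symm p.1, p.2)
      show ((σ ((f.1 (σ.symm (s * p.1), p.2)).1)), (f.1 (σ.symm (s * p.1), p.2)).2) = _
      rw [map_mul σ.symm s p.1, h]
      simp [map_mul]⟩
  map_id n := Subtype.ext (funext fun p => by
    show (σ (σ.symm p.1), p.2) = p
    simp)
  map_comp {n m k} f g := Subtype.ext (funext fun p => by
    show (σ ((g.1 (f.1 (σ.symm p.1, p.2))).1), (g.1 (f.1 (σ.symm p.1, p.2))).2) =
        (σ ((g.1 (σ.symm (σ ((f.1 (σ.symm p.1, p.2)).1)), (f.1 (σ.symm p.1, p.2)).2)).1),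
          (g.1 (σ.symm (σ ((f.1 (σ.symm p.1, p.2)).1)), (f.1 (σ.symm p.1, p.2)).2)).2)
    simp)

/-- The canonical injection `μᵢ : S = F₁ ⟶ Fₙ`, `t ↦ (t, i)`. -/
def inj (S : Type) [Monoid S] (n : ℕ) (i : Fin n) : toSk S 1 ⟶ toSk S n :=
  ⟨fun p => (p.1, i), fun _ _ => rfl⟩

/-!
An automorphism `φ` preserves epimorphisms, and there is an epimorphism `F_q ⟶ Fₙ` only if
`n ≤ q`, because `F_q` must meet every summand of `Fₙ`. With `φ F₀ = F₀` (only `F₀` maps to `F₀`)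
this makes the object map of `φ` a monotone bijection of `ℕ`, hence the identity.

Right multiplications `ρ_t : F₁ ⟶ F₁` identify `End F₁` with `Sᵐᵒᵖ`, so `φ` restricted to `End F₁`
is `ρ_t ↦ ρ_{σ t}` for a monoid automorphism `σ` of `S`. A morphism `f : Fₙ ⟶ Fₘ` is determined
by the composites `μᵢ ≫ f = ρ_a ≫ μⱼ`; since `φ` fixes the `μᵢ`, it agrees with `φ^σ` on `f`.
-/

namespace IsCatAutomorphism

variable {C : Type*} [Category C] {φ : C ⥤ C}

theorem isEquivalence_s2 (hφ : IsCatAutomorphism φ) : φ.IsEquivalence := by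
  obtain ⟨ψ, h₁, h₂⟩ := hφ
  exact (CategoryTheory.Equivalence.mk φ ψ (eqToIso h₁.symm) (eqToIso h₂)).isEquivalence_functor

theorem bijective_obj (hφ : IsCatAutomorphism φ) : Function.Bijective φ.obj := by
  obtain ⟨ψ, h₁, h₂⟩ := hφ
  exact ⟨Function.LeftInverse.injective (g := ψ.obj) (Functor.congr_obj h₁),
    Function.RightInverse.surjective (g := ψ.obj) (Functor.congr_obj h₂)⟩

end IsCatAutomorphism

namespace CategoryTheory.Functor

variable {C : Type*} [Category C]

def mapOfObjEq (φ : C ⥤ C) (hφ : ∀ X, φ.obj X = X) {X Y : C} (f : X ⟶ Y) : X ⟶ Y :=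
  eqToHom (hφ X).symm ≫ φ.map f ≫ eqToHom (hφ Y)

variable {φ : C ⥤ C} (hφ : ∀ X, φ.obj X = X)

theorem mapOfObjEq_heq {X Y : C} (f : X ⟶ Y) : HEq (φ.mapOfObjEq hφ f) (φ.map f) := by
  simp only [mapOfObjEq, eqToHom_comp_heq_iff, comp_eqToHom_heq_iff, HEq.rfl]

@[simp]
theorem mapOfObjEq_comp {X Y Z : C} (f : X ⟶ Y) (g : Y ⟶ Z) :
    φ.mapOfObjEq hφ (f ≫ g) = φ.mapOfObjEq hφ f ≫ φ.mapOfObjEq hφ g := by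
  simp [mapOfObjEq]

theorem mapOfObjEq_eq_of_heq {X Y : C} {f : X ⟶ Y} (h : HEq (φ.map f) f) :
    φ.mapOfObjEq hφ f = f :=
  eq_of_heq ((mapOfObjEq_heq hφ f).trans h)

theorem ext_of_mapOfObjEq {G : C ⥤ C} (hG : ∀ X, G.obj X = X)
    (h : ∀ {X Y : C} (f : X ⟶ Y), φ.mapOfObjEq hφ f = G.mapOfObjEq hG f) : φ = G :=
  Functor.hext (fun X => (hφ X).trans (hG X).symm) fun _ _ f =>
    (mapOfObjEq_heq hφ f).symm.trans ((heq_of_eq (h f)).trans (mapOfObjEq_heq hG f))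

noncomputable def mapEndOfObjEq [φ.Full] [φ.Faithful] (X : C) : End X ≃* End X :=
  ((FullyFaithful.ofFullyFaithful φ).mulEquivEnd X).trans (Iso.conj (eqToIso (hφ X)))

theorem mapEndOfObjEq_apply [φ.Full] [φ.Faithful] {X : C} (f : End X) :
    φ.mapEndOfObjEq hφ X f = φ.mapOfObjEq hφ f := by
  simp [mapEndOfObjEq, mapOfObjEq, Iso.conj_apply]

end CategoryTheory.Functor

namespace SkFree

variable {S : Type} [Monoid S]

theorem hom_apply {n m : ℕ} (f : toSk S n ⟶ toSk S m) (s : S) (i : Fin n) :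
    f.1 (s, i) = (s * (f.1 (1, i)).1, (f.1 (1, i)).2) := by
  simpa using f.2 s (1, i)

theorem hom_ext_s2 {n m : ℕ} {f g : toSk S n ⟶ toSk S m}
    (h : ∀ i, inj S n i ≫ f = inj S n i ≫ g) : f = g := by
  refine Subtype.ext (funext fun p => ?_)
  have hi : f.1 (1, p.2) = g.1 (1, p.2) := congrArg (fun k => k.1 (1, (0 : Fin 1))) (h p.2)
  have hf := hom_apply f p.1 p.2
  rw [hi] at hf
  exact hf.trans (hom_apply g p.1 p.2).symm

def rightMul (t : S) : toSk S 1 ⟶ toSk S 1 :=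
  ⟨fun p => (p.1 * t, p.2), fun s p => by simp only [mul_assoc]⟩

theorem rightMul_mul (t u : S) : rightMul (t * u) = rightMul t ≫ rightMul u :=
  Subtype.ext (funext fun p => by
    show (p.1 * (t * u), p.2) = (p.1 * t * u, p.2)
    rw [mul_assoc])

theorem rightMul_fst_apply_one (g : toSk S 1 ⟶ toSk S 1) : rightMul (g.1 (1, (0 : Fin 1))).1 = g :=
  Subtype.ext (funext fun p => by
    have h0 : ∀ j : Fin 1, j = 0 := fun j => Subsingleton.elim _ _
    show (p.1 * (g.1 (1, (0 : Fin 1))).1, p.2) = g.1 (p.1, p.2)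
    rw [hom_apply g p.1 p.2, h0 p.2, h0 (g.1 (1, (0 : Fin 1))).2])

def rightMulEquiv : Sᵐᵒᵖ ≃* End (toSk S 1) where
  toFun t := rightMul t.unop
  invFun g := MulOpposite.op (g.1 (1, (0 : Fin 1))).1
  left_inv t := by simp [rightMul]
  right_inv := rightMul_fst_apply_one
  map_mul' t u := rightMul_mul u.unop t.unop

theorem inj_comp {n m : ℕ} (f : toSk S n ⟶ toSk S m) (i : Fin n) :
    inj S n i ≫ f = rightMul (f.1 (1, i)).1 ≫ inj S m (f.1 (1, i)).2 :=
  Subtype.ext (funext fun p => hom_apply f p.1 i)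

def reindex {n m : ℕ} (c : Fin n → Fin m) : toSk S n ⟶ toSk S m :=
  ⟨fun p => (p.1, c p.2), fun _ _ => rfl⟩

theorem epi_reindex {n m : ℕ} {c : Fin n → Fin m} (hc : Function.Surjective c) :
    Epi (reindex (S := S) c) :=
  ⟨fun {Z} g h w => hom_ext_s2 (m := Z) fun i => by
    obtain ⟨j, rfl⟩ := hc i
    exact congrArg (inj S n j ≫ ·) w⟩

theorem surjective_of_epi {n m : ℕ} (f : toSk S n ⟶ toSk S m) [Epi f] :
    Function.Surjective (β := Fin m) fun i => (f.1 (1, i)).2 := by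
  intro j₀
  by_contra hj₀
  -- `f` equalizes two maps `Fₘ ⟶ F₂` that differ only on the summand `j₀` it misses.
  let g : toSk S m ⟶ toSk S 2 := reindex fun _ => 0
  let h : toSk S m ⟶ toSk S 2 := reindex fun j : Fin m => if j = j₀ then 1 else 0
  have hgh : f ≫ g = f ≫ h := Subtype.ext (funext fun p => by
    have hp : (f.1 p).2 ≠ j₀ := by
      rw [(hom_apply f p.1 p.2 :)]
      exact fun hp => hj₀ ⟨p.2, hp⟩
    exact Prod.ext rfl (if_neg hp).symm)
  have := congrArg (fun k => (k.1 (1, j₀)).2.val) ((cancel_epi f).mp hgh)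
  simp [g, h, reindex] at this

theorem le_of_epi {n m : ℕ} (f : toSk S n ⟶ toSk S m) [hf : Epi f] : m ≤ n := by
  simpa using Fintype.card_le_of_surjective (α := Fin n) (β := Fin m) _ (surjective_of_epi f)

theorem eq_zero_of_hom {n : ℕ} (f : toSk S n ⟶ toSk S 0) : n = 0 :=
  Nat.eq_zero_of_not_pos fun hn => (f.1 (1, ⟨0, hn⟩)).2.elim0

theorem obj_zero {φ : SkFree S ⥤ SkFree S} (hφ : Function.Surjective φ.obj) :
    φ.obj (0 : ℕ) = (0 : ℕ) := by
  obtain ⟨Y, hY⟩ := hφ (toSk S 0)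
  exact eq_zero_of_hom (φ.map (reindex (S := S) (n := 0) (m := Y) Fin.elim0) ≫ eqToHom hY)

theorem monotone_obj {φ : SkFree S ⥤ SkFree S} [φ.PreservesEpimorphisms]
    (hφ : Function.Surjective φ.obj) : Monotone (α := ℕ) (β := ℕ) φ.obj := by
  intro x y hxy
  rcases Nat.eq_zero_or_pos x with rfl | hx
  · rw [obj_zero hφ]
    exact Nat.zero_le _
  · have : NeZero x := ⟨hx.ne'⟩
    let c : toSk S y ⟶ toSk S x := reindex (Function.invFun (Fin.castLE hxy))
    have : Epi c := epi_reindex (Function.invFun_surjective (Fin.castLE_injective hxy))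
    exact le_of_epi _ (hf := φ.map_epi c)

theorem obj_eq_self {φ : SkFree S ⥤ SkFree S} [φ.PreservesEpimorphisms]
    (hφ : Function.Bijective φ.obj) (n : SkFree S) : φ.obj n = n :=
  -- an order automorphism of a well-order is the identity
  DFunLike.congr_fun (Subsingleton.elim (StrictMono.orderIsoOfSurjective (α := ℕ) (β := ℕ) _
    ((monotone_obj hφ.2).strictMono_of_injective hφ.1) hφ.2) (OrderIso.refl ℕ)) n

theorem exists_mulEquiv_mapOfObjEq_rightMul (φ : SkFree S ⥤ SkFree S) [φ.Full] [φ.Faithful]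
    (hφ : ∀ X, φ.obj X = X) :
    ∃ σ : S ≃* S, ∀ t, φ.mapOfObjEq hφ (rightMul t) = rightMul (σ t) :=
  ⟨MulEquiv.unop (rightMulEquiv.trans ((φ.mapEndOfObjEq hφ _).trans rightMulEquiv.symm)),
    fun t => (Functor.mapEndOfObjEq_apply hφ (rightMul t)).symm.trans
      (rightMulEquiv.apply_symm_apply _).symm⟩

theorem mapOfObjEq_eq_twistFunctor_map {φ : SkFree S ⥤ SkFree S} (hφ : ∀ X, φ.obj X = X)
    {σ : S ≃* S} (hinj : ∀ n i, φ.mapOfObjEq hφ (inj S n i) = inj S n i)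
    (hmul : ∀ t, φ.mapOfObjEq hφ (rightMul t) = rightMul (σ t))
    {n m : ℕ} (f : toSk S n ⟶ toSk S m) : φ.mapOfObjEq hφ f = (twistFunctor S σ).map f := by
  refine hom_ext_s2 fun i => ?_
  obtain ⟨a, j, hfi⟩ : ∃ (a : S) (j : Fin m), inj S n i ≫ f = rightMul a ≫ inj S m j :=
    ⟨_, _, inj_comp f i⟩
  have h := congrArg (φ.mapOfObjEq hφ) hfi
  rw [Functor.mapOfObjEq_comp, Functor.mapOfObjEq_comp, hinj, hinj, hmul] at h
  rw [h]
  refine Subtype.ext (funext fun p => ?_)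
  have hf : f.1 (σ.symm p.1, i) = (σ.symm p.1 * a, j) :=
    congrArg (fun k => k.1 (σ.symm p.1, (0 : Fin 1))) hfi
  show (p.1 * σ a, j) = (σ (f.1 (σ.symm p.1, i)).1, (f.1 (σ.symm p.1, i)).2)
  rw [hf, map_mul, MulEquiv.apply_symm_apply]
  rfl

end SkFree

/-- Every automorphism `φ` of the skeleton category `_S𝒜⁰_Sk` which is
constant on the canonical injections, i.e. `φ(μᵢ) = μᵢ` for all `μᵢ : S ⟶ Fₙ`, is twisted:
`φ = φ^σ` for some monoid automorphism `σ` of `S`. -/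
theorem automorphism_constant_on_injections_is_twisted (S : Type) [Monoid S]
    (φ : SkFree S ⥤ SkFree S) (hφ : IsCatAutomorphism φ)
    (hμ : ∀ (n : ℕ) (i : Fin n), HEq (φ.map (inj S n i)) (inj S n i)) :
    ∃ σ : S ≃* S, φ = twistFunctor S σ := by
  have := hφ.isEquivalence_s2
  have hobj : ∀ X, φ.obj X = X := SkFree.obj_eq_self hφ.bijective_obj
  obtain ⟨σ, hσ⟩ := SkFree.exists_mulEquiv_mapOfObjEq_rightMul φ hobj
  have hinj n i := Functor.mapOfObjEq_eq_of_heq hobj (hμ n i)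
  exact ⟨σ, Functor.ext_of_mapOfObjEq hobj (fun _ => rfl) fun f =>
    SkFree.mapOfObjEq_eq_twistFunctor_map hobj hinj hσ f⟩
end

section
/- For any monoid S, every automorphism of the category _S𝒜⁰ of finitely generated free left S-acts is semi-inner. -/
open CategoryTheory

/-- An automorphism `φ` of `_S𝒜⁰` is *semi-inner with associated monoid automorphism `σ`*
if there is a family of bijections `s_F : F ≃ φ(F)` that are `σ`-semilinear,
i.e. `s_F (s • a) = σ s • s_F a`, and commute with all morphisms:
`φ(f) ∘ s_F = s_{F\'} ∘ f`. -/
def SemiInnerWith (S : Type) [Monoid S] (φ : FreeAct S ⥤ FreeAct S) (σ : S ≃* S) : Prop :=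
  ∃ e : ∀ A : FreeAct S, (S × A.X) ≃ (S × (φ.obj A).X),
    (∀ (A : FreeAct S) (s : S) (p : S × A.X),
        e A (s * p.1, p.2) = (σ s * (e A p).1, (e A p).2)) ∧
    ∀ {A B : FreeAct S} (f : A ⟶ B) (p : S × A.X), (φ.map f).1 (e A p) = e B (f.1 p)

/-- An automorphism of `_S𝒜⁰` is *semi-inner* if it is semi-inner with respect to some
monoid automorphism of `S`. -/
def SemiInner (S : Type) [Monoid S] (φ : FreeAct S ⥤ FreeAct S) : Prop :=
  ∃ σ : S ≃* S, SemiInnerWith S φ σ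

/-!
The free act on one generator, `FreeAct.unit S`, represents the forgetful functor:
`(unit ⟶ A) ≃ S × A.X`, `f ↦ f (1, ⋆)`. An automorphism `φ` is fully faithful, and it maps
`unit` to a free act of rank one again (of rank at least one since `φ` is full, of rank at most
one since `φ unit` is a retract of `φ (φ⁻¹ unit) = unit`). Choosing its generator `x₀`,
`s_A (p) := φ(p̂) (1, x₀)`, where `p̂ : unit ⟶ A` is the morphism with `p̂ (1, ⋆) = p`, is a
bijection natural in `A`, and `σ` is read off from the action of `φ` on `End(unit) ≅ S`.
-/

namespace FreeAct

variable {S : Type} [Monoid S]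

variable (S) in
def unit : FreeAct S := ⟨PUnit, inferInstance⟩

variable (S) in
def empty : FreeAct S := ⟨Empty, inferInstance⟩

instance : Unique (unit S).X := inferInstanceAs (Unique PUnit)

instance : IsEmpty (empty S).X := inferInstanceAs (IsEmpty Empty)

lemma hom_ext {A B : FreeAct S} {f g : A ⟶ B} (h : ∀ p, f.1 p = g.1 p) : f = g :=
  Subtype.ext (funext h)

@[simp]
lemma comp_val {A B C : FreeAct S} (f : A ⟶ B) (g : B ⟶ C) (p : S × A.X) :
    (f ≫ g).1 p = g.1 (f.1 p) := rfl

lemma hom_apply {A B : FreeAct S} (f : A ⟶ B) (t : S) (x : A.X) :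
    f.1 (t, x) = (t * (f.1 (1, x)).1, (f.1 (1, x)).2) := by
  simpa using f.2 t (1, x)

/-- The morphism `(t, x) ↦ (t * q.1, q.2)`; on a free act of rank one it is the unique
morphism sending the generator to `q`. -/
def pointHom {A B : FreeAct S} (q : S × B.X) : A ⟶ B :=
  ⟨fun p => (p.1 * q.1, q.2), fun s p => by simp [mul_assoc]⟩

@[simp]
lemma pointHom_val {A B : FreeAct S} (q : S × B.X) (p : S × A.X) :
    (pointHom (A := A) q).1 p = (p.1 * q.1, q.2) := rfl

lemma pointHom_comp {A B C : FreeAct S} (q : S × B.X) (f : B ⟶ C) :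
    pointHom (A := A) q ≫ f = pointHom (f.1 q) :=
  hom_ext fun p => f.2 p.1 q

def homEquivOfSubsingleton {A : FreeAct S} [Subsingleton A.X] (x : A.X) (B : FreeAct S) :
    (A ⟶ B) ≃ S × B.X where
  toFun f := f.1 (1, x)
  invFun := pointHom
  left_inv f := hom_ext fun ⟨t, y⟩ => by
    rw [Subsingleton.elim y x, hom_apply f t x]; rfl
  right_inv q := by simp

lemma subsingleton_X_of_retract {A B : FreeAct S} [Subsingleton B.X] (h : Retract A B) :
    Subsingleton A.X where
  allEq a a' := by
    have hr (a : A.X) : (h.r.1 (1, (h.i.1 (1, a)).2)).2 = a := by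
      rw [← congrArg Prod.snd (hom_apply h.r _ _), ← comp_val, h.retract]
      rfl
    rw [← hr a, ← hr a', Subsingleton.elim (h.i.1 (1, a)).2 (h.i.1 (1, a')).2]

def retractUnit {A : FreeAct S} (x : A.X) : Retract (unit S) A where
  i := pointHom (1, x)
  r := pointHom (1, PUnit.unit)
  retract := hom_ext fun _ => by simp; rfl

lemma nonempty_obj_X (F : FreeAct S ⥤ FreeAct S) [F.Full] (A : FreeAct S) [Nonempty A.X] :
    Nonempty (F.obj A).X := by
  by_contra h
  rw [not_nonempty_iff] at h
  let f : F.obj A ⟶ F.obj (empty S) := ⟨fun p => isEmptyElim p.2, fun _ p => isEmptyElim p.2⟩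
  exact isEmptyElim ((F.preimage f).1 (1, Classical.arbitrary A.X)).2

lemma subsingleton_obj_unit_X {F G : FreeAct S ⥤ FreeAct S} [G.Full] (h : G ⋙ F = 𝟭 _) :
    Subsingleton (F.obj (unit S)).X := by
  obtain ⟨y⟩ := nonempty_obj_X G (unit S)
  have : Subsingleton (F.obj (G.obj (unit S))).X := by
    rw [← Functor.comp_obj, h, Functor.id_obj]
    infer_instance
  exact subsingleton_X_of_retract ((retractUnit y).map F)

section FullyFaithful

variable (F : FreeAct S ⥤ FreeAct S) (hF : F.FullyFaithful)
  [Subsingleton (F.obj (unit S)).X] (x₀ : (F.obj (unit S)).X)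

def semiInnerEquiv (A : FreeAct S) : S × A.X ≃ S × (F.obj A).X :=
  ((homEquivOfSubsingleton (A := unit S) PUnit.unit A).symm.trans hF.homEquiv).trans
    (homEquivOfSubsingleton x₀ (F.obj A))

lemma semiInnerEquiv_apply (A : FreeAct S) (p : S × A.X) :
    semiInnerEquiv F hF x₀ A p = (F.map (pointHom p)).1 (1, x₀) := rfl

lemma semiInnerEquiv_naturality {A B : FreeAct S} (f : A ⟶ B) (p : S × A.X) :
    (F.map f).1 (semiInnerEquiv F hF x₀ A p) = semiInnerEquiv F hF x₀ B (f.1 p) := by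
  rw [semiInnerEquiv_apply, semiInnerEquiv_apply, ← comp_val, ← F.map_comp, pointHom_comp]

lemma semiInnerEquiv_smul {A : FreeAct S} (s : S) (p : S × A.X) :
    semiInnerEquiv F hF x₀ A (s * p.1, p.2) =
      ((semiInnerEquiv F hF x₀ (unit S) (s, PUnit.unit)).1 * (semiInnerEquiv F hF x₀ A p).1,
        (semiInnerEquiv F hF x₀ A p).2) := by
  have hfactor : pointHom (A := unit S) (s * p.1, p.2) =
      pointHom (B := unit S) (s, PUnit.unit) ≫ pointHom p := by
    rw [pointHom_comp]
    rfl
  set q := semiInnerEquiv F hF x₀ (unit S) (s, PUnit.unit)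
  have hq : (F.map (pointHom (B := unit S) (s, PUnit.unit))).1 (1, x₀) = (q.1, x₀) :=
    Prod.ext rfl (Subsingleton.elim _ _)
  rw [semiInnerEquiv_apply, semiInnerEquiv_apply, hfactor, F.map_comp, comp_val, hq, hom_apply]

/-- The monoid automorphism `σ`: `End(unit) ≅ S` (via `s ↦ pointHom (s, ⋆)`) is carried by `F`
onto `End(F unit) ≅ S`. -/
def semiInnerMulEquiv : S ≃* S :=
  letI := uniqueOfSubsingleton x₀
  { ((Equiv.prodPUnit S).symm.trans (semiInnerEquiv F hF x₀ (unit S))).trans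
      (Equiv.prodUnique S _) with
    map_mul' s t :=
      congrArg Prod.fst (semiInnerEquiv_smul (A := unit S) F hF x₀ s (t, PUnit.unit)) }

theorem semiInnerWith_semiInnerMulEquiv : SemiInnerWith S F (semiInnerMulEquiv F hF x₀) :=
  ⟨semiInnerEquiv F hF x₀, fun _ => semiInnerEquiv_smul F hF x₀,
    fun f => semiInnerEquiv_naturality F hF x₀ f⟩

end FullyFaithful

end FreeAct

open FreeAct in
/-- **Theorem 7.** For any monoid `S`, every automorphism of the category
`_S𝒜⁰` of finitely generated free left `S`-acts is semi-inner. -/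
theorem automorphism_semiInner (S : Type) [Monoid S]
    (φ : FreeAct S ⥤ FreeAct S) (hφ : IsCatAutomorphism φ) :
    SemiInner S φ := by
  obtain ⟨ψ, hφψ, hψφ⟩ := hφ
  let e : FreeAct S ≌ FreeAct S := .mk φ ψ (eqToIso hφψ.symm) (eqToIso hψφ)
  have : Subsingleton (φ.obj (unit S)).X := subsingleton_obj_unit_X (G := e.inverse) hψφ
  obtain ⟨x₀⟩ := nonempty_obj_X e.functor (unit S)
  exact ⟨_, semiInnerWith_semiInnerMulEquiv φ e.fullyFaithfulFunctor x₀⟩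
end

section
/- Let S be a monoid and σ a monoid automorphism of S. For each n ∈ ℕ let σₙ : S × Fin n → S × Fin n be the bijection (t,i) ↦ (σ(t), i). Then: (1) σₙ is σ-semilinear, i.e. σₙ(s·a) = σ(s)·σₙ(a) for all s ∈ S and a ∈ S × Fin n; (2) for every S-act homomorphism f : S × Fin n → S × Fin m, the map σₘ ∘ f ∘ σₙ⁻¹ is again an S-act homomorphism; and (3) the assignment Fₙ ↦ Fₙ on objects and f ↦ σₘ ∘ f ∘ σₙ⁻¹ on morphisms defines an automorphism φ^σ of the skeleton category _S𝒜⁰_Sk, with inverse φ^(σ⁻¹). -/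
open CategoryTheory

theorem twist_aux (S : Type) [Monoid S] (σ : S ≃* S) :
    twistFunctor S σ ⋙ twistFunctor S σ.symm = 𝟭 (SkFree S) := by
  refine CategoryTheory.Functor.ext (fun n => rfl) (fun n m f => ?_)
  refine Subtype.ext (funext fun p => ?_)
  show (σ.symm (σ ((f.1 (σ.symm (σ.symm.symm p.1), p.2)).1)),
      (f.1 (σ.symm (σ.symm.symm p.1), p.2)).2) = _
  simp [SkFree, CategoryTheory.eqToHom_refl]
  rfl

/-- For a monoid automorphism `σ` of `S` and the bijections
`σₙ : S × Fin n ≃ S × Fin n`, `(t, i) ↦ (σ t, i)`: (1) `σₙ` is `σ`-semilinear;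
(2) conjugation by the `σₙ` sends `S`-act homomorphisms to `S`-act homomorphisms;
(3) `Fₙ ↦ Fₙ`, `f ↦ σₘ ∘ f ∘ σₙ⁻¹` defines an automorphism `φ^σ` of `_S𝒜⁰_Sk`,
with inverse `φ^(σ⁻¹)`. -/
theorem twist_is_automorphism (S : Type) [Monoid S] (σ : S ≃* S) :
    (∀ (n : ℕ) (s : S) (p : S × Fin n),
        (Equiv.prodCongr σ.toEquiv (Equiv.refl (Fin n))) (s * p.1, p.2) =
          (σ s * ((Equiv.prodCongr σ.toEquiv (Equiv.refl (Fin n))) p).1,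
            ((Equiv.prodCongr σ.toEquiv (Equiv.refl (Fin n))) p).2)) ∧
    (∀ (n m : ℕ) (f : S × Fin n → S × Fin m), IsActHom S f →
        IsActHom S ((Equiv.prodCongr σ.toEquiv (Equiv.refl (Fin m))) ∘ f ∘
          (Equiv.prodCongr σ.toEquiv (Equiv.refl (Fin n))).symm)) ∧
    (∀ n : ℕ, (twistFunctor S σ).obj (toSk S n) = toSk S n) ∧
    (∀ (n m : ℕ) (f : toSk S n ⟶ toSk S m),
        ((twistFunctor S σ).map f).1 =
          (Equiv.prodCongr σ.toEquiv (Equiv.refl (Fin m))) ∘ f.1 ∘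
            (Equiv.prodCongr σ.toEquiv (Equiv.refl (Fin n))).symm) ∧
    (twistFunctor S σ ⋙ twistFunctor S σ.symm = 𝟭 (SkFree S) ∧
      twistFunctor S σ.symm ⋙ twistFunctor S σ = 𝟭 (SkFree S)) := by
  refine ⟨fun n s p => by simp, fun n m f hf => ?_, fun n => rfl, fun n m f => rfl, ?_, ?_⟩
  · intro s p
    have h := hf (σ.symm s) (σ.symm p.1, p.2)
    simp only [Function.comp_apply, Equiv.prodCongr_symm, Equiv.refl_symm,
      Equiv.prodCongr_apply, Prod.map]
    show (σ (f (σ.symm (s * p.1), p.2)).1, (f (σ.symm (s * p.1), p.2)).2) = _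
    rw [map_mul σ.symm s p.1, h]
    simp
  · exact twist_aux S σ
  · have := twist_aux S σ.symm
    rwa [MulEquiv.symm_symm] at this
end
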